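/- Under the setup of the piecewise-continuous random infectivity function λ, the centered function λ̆(t) = λ(t) − E[λ(t)] satisfies, for all 0 ≤ s ≤ t: E[|λ̆(t) − λ̆(s)|²] ≤ 8(t−s)^{2α} + 4(λ*)²·k·Σ_{j=1}^{k−1}(F_j(t) − F_j(s)) + 4(λ*)²·(Σ_{j=1}^{k−1}(F_j(t) − F_j(s)))². -/

import Mathlib

/-!
On the event that no breakpoint `ξʲ`, `1 ≤ j ≤ k - 1`, falls in `(s, t]`, the times `s` and `t`
lie on the same continuous piece, so `|λ(t) - λ(s)| ≤ (t - s)^α`; on the complementary crossing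
event we only have `|λ(t) - λ(s)| ≤ λ*`. Hence `E[(λ(t) - λ(s))²] ≤ (t - s)^{2α} + λ*² P(crossing)`,
and a union bound gives `P(crossing) ≤ Σⱼ (Fⱼ(t) - Fⱼ(s))`. Centering only lowers the second
moment, since the variance is at most the second moment.
-/

open MeasureTheory ProbabilityTheory Finset

section Piecewise

variable {ξ : ℕ → EReal} {k : ℕ}

theorem exists_mem_Icc_piece {u : EReal} (h0 : ξ 0 ≤ u) (hk : u < ξ k) :
    ∃ j ∈ Icc 1 k, ξ (j - 1) ≤ u ∧ u < ξ j := by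
  classical
  have hex : ∃ j, u < ξ j := ⟨k, hk⟩
  have hpos : 0 < Nat.find hex := by
    by_contra! h
    exact (Nat.find_spec hex).not_ge (by rwa [Nat.le_zero.1 h])
  refine ⟨Nat.find hex, mem_Icc.2 ⟨hpos, Nat.find_le hk⟩, ?_, Nat.find_spec hex⟩
  exact not_lt.1 (Nat.find_min hex (by omega))

theorem crossing_of_piece_ne (hξ : MonotoneOn ξ (Set.Iic k)) {i j : ℕ} {s t : EReal}
    (hst : s ≤ t) (hi : i ∈ Icc 1 k) (hj : j ∈ Icc 1 k)
    (hs : ξ (i - 1) ≤ s ∧ s < ξ i) (ht : ξ (j - 1) ≤ t ∧ t < ξ j) (hij : i ≠ j) :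
    i ∈ Icc 1 (k - 1) ∧ s < ξ i ∧ ξ i ≤ t := by
  rw [mem_Icc] at hi hj
  have hmono : ∀ a b, a ≤ b → b ≤ k → ξ a ≤ ξ b := fun a b hab hb =>
    hξ (Set.mem_Iic.2 (hab.trans hb)) (Set.mem_Iic.2 hb) hab
  rcases hij.lt_or_gt with hlt | hgt
  · exact ⟨mem_Icc.2 ⟨hi.1, by omega⟩, hs.2, (hmono i (j - 1) (by omega) (by omega)).trans ht.1⟩
  · exact absurd (ht.2.trans_le ((hmono j (i - 1) (by omega) (by omega)).trans hs.1))
      (not_lt.2 hst)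

theorem sum_Icc_ite_piece_eq {M : Type*} [AddCommMonoid M] (hξ : MonotoneOn ξ (Set.Iic k))
    (g : ℕ → M) {j : ℕ} {u : EReal} (hj : j ∈ Icc 1 k) (hu : ξ (j - 1) ≤ u ∧ u < ξ j) :
    ∑ i ∈ Icc 1 k, (if ξ (i - 1) ≤ u ∧ u < ξ i then g i else 0) = g j := by
  rw [sum_eq_single_of_mem j hj, if_pos hu]
  intro i hi hij
  rw [if_neg]
  intro hiu
  rcases hij.lt_or_gt with hlt | hgt
  · exact hiu.2.not_ge (crossing_of_piece_ne hξ le_rfl hi hj hiu hu hlt.ne).2.2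
  · exact hu.2.not_ge (crossing_of_piece_ne hξ le_rfl hj hi hu hiu hgt.ne).2.2

theorem piecewise_increment_cases (hξ : MonotoneOn ξ (Set.Iic k)) (h0 : ξ 0 = 0) (hk : ξ k = ⊤)
    {f : ℝ → ℝ} {g : ℕ → ℝ → ℝ}
    (hf : ∀ u, 0 ≤ u → f u = ∑ j ∈ Icc 1 k,
      (if ξ (j - 1) ≤ (u : EReal) ∧ (u : EReal) < ξ j then g j u else 0))
    {s t : ℝ} (hs : 0 ≤ s) (hst : s ≤ t) :
    (∃ j ∈ Icc 1 k, f t - f s = g j t - g j s) ∨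
      ∃ j ∈ Icc 1 (k - 1), (s : EReal) < ξ j ∧ ξ j ≤ t := by
  have hpiece : ∀ u : ℝ, 0 ≤ u → ∃ j ∈ Icc 1 k, ξ (j - 1) ≤ (u : EReal) ∧ (u : EReal) < ξ j :=
    fun u hu => exists_mem_Icc_piece (by rw [h0]; exact_mod_cast hu) (by simp [hk])
  obtain ⟨i, hi, hsi⟩ := hpiece s hs
  obtain ⟨j, hj, htj⟩ := hpiece t (hs.trans hst)
  by_cases hij : i = j
  · subst hij
    left
    refine ⟨i, hi, ?_⟩
    rw [hf t (hs.trans hst), hf s hs, sum_Icc_ite_piece_eq hξ _ hi hsi,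
      sum_Icc_ite_piece_eq hξ _ hi htj]
  · obtain ⟨hi', hcross⟩ := crossing_of_piece_ne hξ (EReal.coe_le_coe hst) hi hj hsi htj hij
    exact Or.inr ⟨i, hi', hcross⟩

end Piecewise

section CrossingEvent

variable {Ω : Type*} {ξ : ℕ → Ω → EReal} {k : ℕ}

def crossingEvent (ξ : ℕ → Ω → EReal) (k : ℕ) (s t : ℝ) : Set Ω :=
  ⋃ j ∈ Icc 1 (k - 1), {ω | ξ j ω ≤ (t : EReal)} \ {ω | ξ j ω ≤ (s : EReal)}

theorem measurableSet_crossingEvent [MeasurableSpace Ω] (hξ : ∀ j, Measurable (ξ j)) (s t : ℝ) :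
    MeasurableSet (crossingEvent ξ k s t) :=
  measurableSet_biUnion _ fun j _ =>
    ((hξ j) measurableSet_Iic).diff ((hξ j) measurableSet_Iic)

theorem measureReal_crossingEvent_le [MeasurableSpace Ω] {μ : Measure Ω} [IsFiniteMeasure μ]
    (hξ : ∀ j, Measurable (ξ j)) {s t : ℝ} (hst : s ≤ t) :
    μ.real (crossingEvent ξ k s t) ≤
      ∑ j ∈ Icc 1 (k - 1), (μ.real {ω | ξ j ω ≤ (t : EReal)} - μ.real {ω | ξ j ω ≤ (s : EReal)}) :=
  (measureReal_biUnion_finset_le _ _).trans_eq <| sum_congr rfl fun j _ =>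
    measureReal_sdiff (fun _ hω => le_trans hω (EReal.coe_le_coe hst))
      ((hξ j) measurableSet_Iic)

theorem sq_sub_le_add_mul_indicator_crossingEvent {ω : Ω} (hξ : MonotoneOn (ξ · ω) (Set.Iic k))
    (h0 : ξ 0 ω = 0) (hk : ξ k ω = ⊤) {f : ℝ → ℝ} {g : ℕ → ℝ → ℝ}
    (hf : ∀ u, 0 ≤ u → f u = ∑ j ∈ Icc 1 k,
      (if ξ (j - 1) ω ≤ (u : EReal) ∧ (u : EReal) < ξ j ω then g j u else 0))
    {L α s t : ℝ} (hbound : ∀ u, 0 ≤ u → 0 ≤ f u ∧ f u ≤ L)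
    (hholder : ∀ j ∈ Icc 1 k, |g j t - g j s| ≤ (t - s) ^ α) (hs : 0 ≤ s) (hst : s ≤ t) :
    (f t - f s) ^ 2 ≤ (t - s) ^ (2 * α) + L ^ 2 * (crossingEvent ξ k s t).indicator 1 ω := by
  rcases piecewise_increment_cases hξ h0 hk hf hs hst with ⟨j, hj, hfg⟩ | ⟨j, hj, hsj, hjt⟩
  · have hind : 0 ≤ L ^ 2 * (crossingEvent ξ k s t).indicator 1 ω :=
      mul_nonneg (sq_nonneg L) (Set.indicator_nonneg (fun _ _ => zero_le_one) ω)
    have hsq : (f t - f s) ^ 2 ≤ (t - s) ^ (2 * α) := by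
      rw [show 2 * α = α * (2 : ℕ) by push_cast; ring, Real.rpow_mul_natCast (sub_nonneg.2 hst),
        ← sq_abs, hfg]
      exact pow_le_pow_left₀ (abs_nonneg _) (hholder j hj) 2
    linarith
  · have hmem : ω ∈ crossingEvent ξ k s t :=
      Set.mem_biUnion hj ⟨hjt, not_le.2 hsj⟩
    have habs : |f t - f s| ≤ L := abs_sub_le_of_nonneg_of_le
      (hbound t (hs.trans hst)).1 (hbound t (hs.trans hst)).2 (hbound s hs).1 (hbound s hs).2
    rw [Set.indicator_of_mem hmem, Pi.one_apply, mul_one, ← sq_abs]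
    linarith [pow_le_pow_left₀ (abs_nonneg _) habs 2, Real.rpow_nonneg (sub_nonneg.2 hst) (2 * α)]

end CrossingEvent

theorem integral_sq_le_add_mul_measureReal {Ω : Type*} [MeasurableSpace Ω] {μ : Measure Ω}
    [IsFiniteMeasure μ] {X : Ω → ℝ} {B : Set Ω} (hB : MeasurableSet B) {a b : ℝ}
    (h : ∀ᵐ ω ∂μ, X ω ^ 2 ≤ a + b * B.indicator 1 ω) :
    ∫ ω, X ω ^ 2 ∂μ ≤ a * μ.real Set.univ + b * μ.real B := by
  have hind : Integrable (fun ω => b * B.indicator (1 : Ω → ℝ) ω) μ :=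
    ((integrable_const 1).indicator hB).const_mul b
  have hint : Integrable (fun ω => a + b * B.indicator 1 ω) μ := (integrable_const a).add hind
  refine (integral_mono_of_nonneg (Filter.Eventually.of_forall fun ω => sq_nonneg (X ω))
    hint h).trans_eq ?_
  rw [integral_add (integrable_const a) hind,
    integral_const, integral_const_mul, integral_indicator_one hB, smul_eq_mul, mul_comm]

theorem infectivity_centered_second_moment_increment_bound_general
    {Ω : Type*} [MeasurableSpace Ω] (μ : Measure Ω) [IsProbabilityMeasure μ]
    (k : ℕ) (hk : 1 ≤ k)
    (ξ : ℕ → Ω → EReal) (lamj : ℕ → Ω → ℝ → ℝ) (lam : Ω → ℝ → ℝ)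
    (lamstar α : ℝ)
    (hξmeas : ∀ j, Measurable (fun ω => ξ j ω))
    (hlammeas : ∀ t : ℝ, Measurable (fun ω => lam ω t))
    (hξ0 : ∀ ω, ξ 0 ω = 0)
    (hξk : ∀ ω, ξ k ω = ⊤)
    (hξmono : ∀ ω, ∀ j < k, ξ j ω < ξ (j + 1) ω)
    (hdecomp : ∀ ω t, 0 ≤ t →
      lam ω t = ∑ j ∈ Finset.Icc 1 k,
        (if ξ (j - 1) ω ≤ (t : EReal) ∧ (t : EReal) < ξ j ω then lamj j ω t else 0))
    (hholder : ∀ᵐ ω ∂μ, ∀ s t : ℝ, 0 ≤ s → s ≤ t → ∀ j ∈ Finset.Icc 1 k,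
      |lamj j ω t - lamj j ω s| ≤ (t - s) ^ α)
    (hbound : ∀ᵐ ω ∂μ, ∀ u : ℝ, 0 ≤ u → 0 ≤ lam ω u ∧ lam ω u ≤ lamstar) :
    ∀ s t : ℝ, 0 ≤ s → s ≤ t →
      (∫ ω, ((lam ω t - ∫ ω', lam ω' t ∂μ) - (lam ω s - ∫ ω', lam ω' s ∂μ)) ^ 2 ∂μ)
        ≤ 8 * (t - s) ^ (2 * α)
          + 4 * lamstar ^ 2 * k * ∑ j ∈ Finset.Icc 1 (k - 1),
              ((μ {ω | ξ j ω ≤ (t : EReal)}).toReal - (μ {ω | ξ j ω ≤ (s : EReal)}).toReal)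
          + 4 * lamstar ^ 2 * (∑ j ∈ Finset.Icc 1 (k - 1),
              ((μ {ω | ξ j ω ≤ (t : EReal)}).toReal - (μ {ω | ξ j ω ≤ (s : EReal)}).toReal)) ^ 2 := by
  intro s t hs hst
  simp only [← measureReal_def]
  set S := ∑ j ∈ Icc 1 (k - 1),
    (μ.real {ω | ξ j ω ≤ (t : EReal)} - μ.real {ω | ξ j ω ≤ (s : EReal)})
  have hint : ∀ u, 0 ≤ u → Integrable (fun ω => lam ω u) μ := fun u hu =>
    .of_bound (hlammeas u).aestronglyMeasurable lamstar <| hbound.mono fun ω hω => by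
      rw [Real.norm_eq_abs, abs_le]; constructor <;> linarith [hω u hu]
  set X : Ω → ℝ := fun ω => lam ω t - lam ω s
  have hX : Measurable X := (hlammeas t).sub (hlammeas s)
  have hmono : ∀ ω, MonotoneOn (ξ · ω) (Set.Iic k) := fun ω =>
    (strictMonoOn_Iic_of_lt_succ fun j hj => by simpa using hξmono ω j hj).monotoneOn
  have hpt : ∀ᵐ ω ∂μ,
      X ω ^ 2 ≤ (t - s) ^ (2 * α) + lamstar ^ 2 * (crossingEvent ξ k s t).indicator 1 ω := by
    filter_upwards [hholder, hbound] with ω hH hb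
    exact sq_sub_le_add_mul_indicator_crossingEvent (hmono ω) (hξ0 ω) (hξk ω) (hdecomp ω) hb
      (hH s t hs hst) hs hst
  have hcross := measureReal_crossingEvent_le (μ := μ) (k := k) hξmeas hst
  have hcross_nonneg : 0 ≤ μ.real (crossingEvent ξ k s t) := measureReal_nonneg
  have hk' : (1 : ℝ) ≤ k := by exact_mod_cast hk
  calc _ = variance X μ := by
        rw [variance_eq_integral hX.aemeasurable, integral_sub (hint t (hs.trans hst)) (hint s hs)]
        congr 1; funext ω; ring
    _ ≤ ∫ ω, X ω ^ 2 ∂μ := variance_le_expectation_sq hX.aestronglyMeasurable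
    _ ≤ (t - s) ^ (2 * α) + lamstar ^ 2 * μ.real (crossingEvent ξ k s t) := by
        simpa using integral_sq_le_add_mul_measureReal (measurableSet_crossingEvent hξmeas s t) hpt
    _ ≤ _ := by
        nlinarith [Real.rpow_nonneg (sub_nonneg.2 hst) (2 * α), sq_nonneg S,
          mul_le_mul_of_nonneg_left hcross (sq_nonneg lamstar),
          mul_nonneg (mul_nonneg (sq_nonneg lamstar) (hcross_nonneg.trans hcross))
            (sub_nonneg.2 hk')]

/-- second-moment increment bound for the centered infectivity
function `λ̆(t) = λ(t) − E[λ(t)]`: for `0 ≤ s ≤ t`,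
`E[|λ̆(t) − λ̆(s)|²] ≤ 8(t−s)^{2α} + 4(λ*)²·k·Σ_j(F_j(t)−F_j(s)) + 4(λ*)²·(Σ_j(F_j(t)−F_j(s)))²`. -/
theorem infectivity_centered_second_moment_increment_bound
    {Ω : Type*} [MeasurableSpace Ω] (μ : Measure Ω) [IsProbabilityMeasure μ]
    (k : ℕ) (hk : 1 ≤ k)
    (ξ : ℕ → Ω → EReal) (lamj : ℕ → Ω → ℝ → ℝ) (lam : Ω → ℝ → ℝ)
    (lamstar α : ℝ) (hlamstar : 0 < lamstar) (hα : 0 < α)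
    (hξmeas : ∀ j, Measurable (fun ω => ξ j ω))
    (hlammeas : ∀ t : ℝ, Measurable (fun ω => lam ω t))
    (hξ0 : ∀ ω, ξ 0 ω = 0)
    (hξk : ∀ ω, ξ k ω = ⊤)
    (hξmono : ∀ ω, ∀ j < k, ξ j ω < ξ (j + 1) ω)
    (hcont : ∀ j ω, Continuous (lamj j ω))
    (hdecomp : ∀ ω t, 0 ≤ t →
      lam ω t = ∑ j ∈ Finset.Icc 1 k,
        (if ξ (j - 1) ω ≤ (t : EReal) ∧ (t : EReal) < ξ j ω then lamj j ω t else 0))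
    (hholder : ∀ᵐ ω ∂μ, ∀ s t : ℝ, 0 ≤ s → s ≤ t → ∀ j ∈ Finset.Icc 1 k,
      |lamj j ω t - lamj j ω s| ≤ (t - s) ^ α)
    (hbound : ∀ᵐ ω ∂μ, ∀ u : ℝ, 0 ≤ u → 0 ≤ lam ω u ∧ lam ω u ≤ lamstar) :
    ∀ s t : ℝ, 0 ≤ s → s ≤ t →
      (∫ ω, ((lam ω t - ∫ ω', lam ω' t ∂μ) - (lam ω s - ∫ ω', lam ω' s ∂μ)) ^ 2 ∂μ)
        ≤ 8 * (t - s) ^ (2 * α)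
          + 4 * lamstar ^ 2 * k * ∑ j ∈ Finset.Icc 1 (k - 1),
              ((μ {ω | ξ j ω ≤ (t : EReal)}).toReal - (μ {ω | ξ j ω ≤ (s : EReal)}).toReal)
          + 4 * lamstar ^ 2 * (∑ j ∈ Finset.Icc 1 (k - 1),
              ((μ {ω | ξ j ω ≤ (t : EReal)}).toReal - (μ {ω | ξ j ω ≤ (s : EReal)}).toReal)) ^ 2 :=
  infectivity_centered_second_moment_increment_bound_general μ k hk ξ lamj lam lamstar α hξmeas
    hlammeas hξ0 hξk hξmono hdecomp hholder hbound
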